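/- Every family F of subsets of [n] satisfying the (0,1,0,0)-intersection pattern modulo 2 satisfies |F|·(|F| − 1)/2 ≤ n; consequently f_{(0,1,0,0)}(n) ≤ √(2n) + 1. Moreover, as n → ∞, f_{(0,1,0,0)}(n) ~ √(2n). -/

import Mathlib

/-!
For a pair `{A, B} ⊆ F` the set `A ∩ B` has odd size, while for distinct pairs `P ≠ Q` the set
`(⋂ P) ∩ (⋂ Q)` is an intersection of three or four members of `F` and has even size. So the
indicator vectors of the sets `⋂ P` are orthonormal over `𝔽₂`, hence linearly independent in
`𝔽₂ⁿ`, and there are at most `n` pairs (the Oddtown argument).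

Conversely, for odd `m` with `C(m, 2) ≤ n`, label points of `[n]` by the edges of the complete
graph `K_m` and take for each vertex the set of its edges: these stars have even size `m - 1`,
two of them share exactly one edge and three share none. The largest odd `m ≤ ⌊√(2n)⌋` gives
`f(n) ≥ √(2n) - 2`.
-/

open Finset

/-- A family `F` of subsets of `Fin n` satisfies the `α`-intersection pattern modulo 2
(for `α = (α_1, …, α_k)`, here 0-indexed: `α i` governs intersections of `i+1` distinct sets)
if every subfamily of `i+1` distinct sets has intersection of size `≡ α_i (mod 2)`. -/
def SatisfiesPattern (n k : ℕ) (α : Fin k → ZMod 2) (F : Finset (Finset (Fin n))) : Prop :=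
  ∀ i : Fin k, ∀ S : Finset (Finset (Fin n)), S ⊆ F → S.card = i.val + 1 →
    ((S.inf id).card : ZMod 2) = α i

/-- `maxPattern k α n` is `f_α(n)`, the maximum size of a family of subsets of `[n]`
satisfying the `α`-intersection pattern modulo 2. -/
noncomputable def maxPattern (k : ℕ) (α : Fin k → ZMod 2) (n : ℕ) : ℕ :=
  sSup {m : ℕ | ∃ F : Finset (Finset (Fin n)), SatisfiesPattern n k α F ∧ F.card = m}

section Oddtown

variable {α ι : Type*} [Fintype α] [DecidableEq α]

lemma indicator_dotProduct_indicator {R : Type*} [NonAssocSemiring R] (s t : Finset α) :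
    (fun x => if x ∈ s then (1 : R) else 0) ⬝ᵥ (fun x => if x ∈ t then 1 else 0) =
      #(s ∩ t) := by
  simp [dotProduct, ← ite_and, ← mem_inter, inter_comm]

theorem card_le_of_oddtown [Fintype ι] {s : ι → Finset α} (hodd : ∀ i, Odd #(s i))
    (heven : Pairwise fun i j => Even #(s i ∩ s j)) : Fintype.card ι ≤ Fintype.card α := by
  have hli : LinearIndependent (ZMod 2) fun i x => if x ∈ s i then (1 : ZMod 2) else 0 := by
    refine LinearMap.BilinForm.linearIndependent_of_iIsOrtho
      (B := dotProductBilin (ZMod 2) (ZMod 2)) (fun i j hij => ?_) (fun i => ?_)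
    · simpa [Function.onFun, indicator_dotProduct_indicator, ZMod.natCast_eq_zero_iff_even]
        using heven hij
    · simpa [indicator_dotProduct_indicator, ZMod.natCast_eq_zero_iff_even] using hodd i
  simpa using hli.fintype_card_le_finrank

end Oddtown

namespace SatisfiesPattern

variable {n : ℕ} {F : Finset (Finset (Fin n))}

lemma odd_card_inf (hF : SatisfiesPattern n 4 ![0, 1, 0, 0] F) {P : Finset (Finset (Fin n))}
    (hP : P ∈ F.powersetCard 2) : Odd #(P.inf id) := by
  rw [mem_powersetCard] at hP
  simpa [ZMod.natCast_eq_one_iff_odd] using hF 1 P hP.1 hP.2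

lemma even_card_inf_union (hF : SatisfiesPattern n 4 ![0, 1, 0, 0] F)
    {P Q : Finset (Finset (Fin n))} (hP : P ∈ F.powersetCard 2) (hQ : Q ∈ F.powersetCard 2)
    (hPQ : P ≠ Q) : Even #((P ∪ Q).inf id) := by
  rw [mem_powersetCard] at hP hQ
  have hsub : P ∪ Q ⊆ F := union_subset hP.1 hQ.1
  have hle : #(P ∪ Q) ≤ 4 := (card_union_le P Q).trans (by omega)
  have hlt : 2 < #(P ∪ Q) := by
    by_contra! h
    exact hPQ ((eq_of_subset_of_card_le subset_union_left (by omega)).trans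
      (eq_of_subset_of_card_le subset_union_right (by omega)).symm)
  rw [← ZMod.natCast_eq_zero_iff_even]
  obtain h | h : #(P ∪ Q) = 3 ∨ #(P ∪ Q) = 4 := by omega
  · simpa using hF 2 (P ∪ Q) hsub h
  · simpa using hF 3 (P ∪ Q) hsub h

theorem choose_two_le (hF : SatisfiesPattern n 4 ![0, 1, 0, 0] F) : (#F).choose 2 ≤ n := by
  have hpairs := card_le_of_oddtown (s := fun P : F.powersetCard 2 => P.1.inf id)
    (fun P => hF.odd_card_inf P.2) fun P Q hPQ => by
      change Even #(P.1.inf id ⊓ Q.1.inf id)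
      rw [← inf_union]
      exact hF.even_card_inf_union P.2 Q.2 (Subtype.coe_ne_coe.mpr hPQ)
  rwa [Fintype.card_coe, card_powersetCard, Fintype.card_fin] at hpairs

end SatisfiesPattern

section PairStars

variable {m n : ℕ} (e : powersetCard 2 (univ : Finset (Fin m)) ↪ Fin n)

/-- The edges of `K_m` at vertex `i`, with the edges labelled by points of `Fin n` via `e`. -/
def pairStar (i : Fin m) : Finset (Fin n) :=
  ({P : powersetCard 2 univ | i ∈ P.1} : Finset _).map e

lemma inf_pairStar {T : Finset (Fin m)} (hT : T.Nonempty) :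
    T.inf (pairStar e) = ({P : powersetCard 2 univ | T ⊆ P.1} : Finset _).map e := by
  calc T.inf (pairStar e)
      = T.inf' hT (map e ∘ fun i => ({P : powersetCard 2 univ | i ∈ P.1} : Finset _)) :=
        (inf'_eq_inf hT _).symm
    _ = (T.inf' hT fun i => ({P : powersetCard 2 univ | i ∈ P.1} : Finset _)).map e :=
      (apply_inf'_eq_inf'_comp hT _ fun _ _ => map_inter _ _).symm
    _ = _ := by
      congr 1
      ext P
      simp [subset_iff]

lemma card_inf_pairStar {T : Finset (Fin m)} (hT : T.Nonempty) :
    #(T.inf (pairStar e)) = #{P ∈ powersetCard 2 univ | T ⊆ P} := by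
  rw [inf_pairStar e hT, card_map, univ_eq_attach, filter_attach, card_map, card_attach]

lemma card_inf_pairStar_of_card_eq_one {T : Finset (Fin m)} (hT : #T = 1) :
    #(T.inf (pairStar e)) = m - 1 := by
  rw [card_inf_pairStar e (card_pos.mp (by omega)),
    card_filter_powersetCard_subset _ _ _ (subset_univ T) (by omega), hT, card_univ,
    Fintype.card_fin, Nat.choose_one_right]

lemma card_inf_pairStar_of_card_eq_two {T : Finset (Fin m)} (hT : #T = 2) :
    #(T.inf (pairStar e)) = 1 := by
  rw [card_inf_pairStar e (card_pos.mp (by omega)),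
    card_filter_powersetCard_subset _ _ _ (subset_univ T) (by omega), hT, Nat.sub_self,
    Nat.choose_zero_right]

lemma card_inf_pairStar_of_two_lt_card {T : Finset (Fin m)} (hT : 2 < #T) :
    #(T.inf (pairStar e)) = 0 := by
  rw [card_inf_pairStar e (card_pos.mp (by omega)), card_eq_zero, filter_eq_empty_iff]
  intro P hP hTP
  have := card_le_card hTP
  rw [mem_powersetCard] at hP
  omega

lemma pairStar_injective (hm : Odd m) : Function.Injective (pairStar e) := by
  intro i j hij
  by_contra hne
  have h := card_inf_pairStar_of_card_eq_two e (card_pair hne)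
  rw [inf_insert, inf_singleton, hij, inf_idem, ← inf_singleton (f := pairStar e) (b := j),
    card_inf_pairStar_of_card_eq_one e (card_singleton j)] at h
  obtain ⟨k, rfl⟩ := hm
  omega

theorem satisfiesPattern_pairStar (hm : Odd m) :
    SatisfiesPattern n 4 ![0, 1, 0, 0] (univ.map ⟨pairStar e, pairStar_injective e hm⟩) := by
  intro i S hS hcard
  obtain ⟨T, -, rfl⟩ := subset_map_iff.mp hS
  rw [card_map] at hcard
  rw [inf_map]
  change ((T.inf (pairStar e)).card : ZMod 2) = _
  fin_cases i
  · simpa [card_inf_pairStar_of_card_eq_one e hcard, ZMod.natCast_eq_zero_iff_even]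
      using Nat.Odd.sub_odd hm odd_one
  · simp [card_inf_pairStar_of_card_eq_two e hcard]
  · simp [card_inf_pairStar_of_two_lt_card e (by simp at hcard; omega : 2 < #T)]
  · simp [card_inf_pairStar_of_two_lt_card e (by simp at hcard; omega : 2 < #T)]

end PairStars

theorem exists_satisfiesPattern_card_eq {m n : ℕ} (hm : Odd m) (hmn : m.choose 2 ≤ n) :
    ∃ F : Finset (Finset (Fin n)), SatisfiesPattern n 4 ![0, 1, 0, 0] F ∧ #F = m := by
  obtain ⟨e⟩ : Nonempty (powersetCard 2 (univ : Finset (Fin m)) ↪ Fin n) :=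
    Function.Embedding.nonempty_of_card_le (by simpa using hmn)
  exact ⟨_, satisfiesPattern_pairStar e hm, by simp⟩

section MaxPattern

variable (k : ℕ) (α : Fin k → ZMod 2) (n : ℕ)

lemma bddAbove_card_satisfiesPattern :
    BddAbove {m | ∃ F : Finset (Finset (Fin n)), SatisfiesPattern n k α F ∧ #F = m} := by
  refine ⟨2 ^ n, ?_⟩
  rintro _ ⟨F, -, rfl⟩
  simpa using card_le_univ F

lemma exists_satisfiesPattern_card_eq_maxPattern :
    ∃ F : Finset (Finset (Fin n)), SatisfiesPattern n k α F ∧ #F = maxPattern k α n := by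
  refine Nat.sSup_mem ?_ (bddAbove_card_satisfiesPattern k α n)
  refine ⟨0, ∅, fun i S hS hcard => ?_, rfl⟩
  simp [subset_empty.mp hS] at hcard

variable {k α n}

lemma card_le_maxPattern {F : Finset (Finset (Fin n))} (hF : SatisfiesPattern n k α F) :
    #F ≤ maxPattern k α n :=
  le_csSup (bddAbove_card_satisfiesPattern k α n) ⟨F, hF, rfl⟩

end MaxPattern

lemma maxPattern_le_sqrt (n : ℕ) : (maxPattern 4 ![0, 1, 0, 0] n : ℝ) ≤ √(2 * n) + 1 := by
  obtain ⟨F, hF, hcard⟩ := exists_satisfiesPattern_card_eq_maxPattern 4 ![0, 1, 0, 0] n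
  have hM : ((maxPattern 4 ![0, 1, 0, 0] n).choose 2 : ℝ) ≤ n := by
    exact_mod_cast hcard ▸ hF.choose_two_le
  rw [Nat.cast_choose_two] at hM
  rcases le_or_gt (maxPattern 4 ![0, 1, 0, 0] n - 1 : ℝ) 0 with h | h
  · linarith [Real.sqrt_nonneg (2 * n)]
  · nlinarith [(Real.le_sqrt' h).mpr (by nlinarith : _ ≤ 2 * (n : ℝ))]

lemma sqrt_sub_two_le_maxPattern {n : ℕ} (hn : 0 < n) :
    √(2 * n) - 2 ≤ (maxPattern 4 ![0, 1, 0, 0] n : ℝ) := by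
  set t := Nat.sqrt (2 * n)
  have ht : 1 ≤ t := Nat.le_sqrt.mpr (by omega)
  -- the largest odd number `m ≤ t`
  set m := 2 * ((t - 1) / 2) + 1
  have hmt : m ≤ t := by omega
  have hmn : m.choose 2 ≤ n := by
    rw [Nat.choose_two_right]
    have := Nat.mul_le_mul hmt (hmt.trans' (Nat.sub_le m 1))
    have : t * t ≤ 2 * n := Nat.sqrt_le (2 * n)
    omega
  obtain ⟨F, hF, hcard⟩ := exists_satisfiesPattern_card_eq (odd_two_mul_add_one _) hmn
  have hm : (m : ℝ) ≤ maxPattern 4 ![0, 1, 0, 0] n := by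
    exact_mod_cast hcard ▸ card_le_maxPattern hF
  have htm : (t : ℝ) ≤ m + 1 := by exact_mod_cast (by omega : t ≤ m + 1)
  have hsqrt : √(2 * n : ℝ) < t + 1 := by
    exact_mod_cast Real.real_sqrt_lt_nat_sqrt_succ (a := 2 * n)
  linarith

open Filter Topology Asymptotics

lemma tendsto_div_of_abs_sub_le {ι : Type*} {l : Filter ι} {u v : ι → ℝ} {C : ℝ}
    (hv : Tendsto v l atTop) (huv : ∀ᶠ x in l, |u x - v x| ≤ C) :
    Tendsto (fun x => u x / v x) l (𝓝 1) := by
  have hequiv : u ~[l] v :=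
    (IsBigO.of_bound C (huv.mono fun x h => by simpa using h)).trans_isLittleO
      ((isLittleO_one_left_iff ℝ).mpr (tendsto_norm_atTop_atTop.comp hv))
  exact (isEquivalent_iff_tendsto_one (hv.eventually_ne_atTop 0)).mp hequiv

theorem f_0100 :
    (∀ (n : ℕ) (F : Finset (Finset (Fin n))), SatisfiesPattern n 4 ![0, 1, 0, 0] F →
      F.card * (F.card - 1) / 2 ≤ n) ∧
    (∀ n : ℕ, (maxPattern 4 ![0, 1, 0, 0] n : ℝ) ≤ Real.sqrt (2 * n) + 1) ∧
    Filter.Tendsto (fun n : ℕ => (maxPattern 4 ![0, 1, 0, 0] n : ℝ) / Real.sqrt (2 * n))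
      Filter.atTop (nhds 1) := by
  refine ⟨fun n F hF => ?_, maxPattern_le_sqrt, ?_⟩
  · simpa [Nat.choose_two_right] using hF.choose_two_le
  · have hsqrt : Tendsto (fun n : ℕ => √(2 * n)) atTop atTop :=
      Real.tendsto_sqrt_atTop.comp (tendsto_natCast_atTop_atTop.const_mul_atTop two_pos)
    refine tendsto_div_of_abs_sub_le (C := 2) hsqrt ?_
    filter_upwards [eventually_gt_atTop 0] with n hn
    rw [abs_le]
    constructor <;> linarith [maxPattern_le_sqrt n, sqrt_sub_two_le_maxPattern hn]
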